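/- arXiv:1505.02179 — 2 statements merged into one kernel-verified Lean document; each statement's English description precedes it below -/
import Mathlib

section
/- Let 0 < q < 1, u, v > 0, and n ∈ ℕ. Then N_q(x^n)(u;v) = ((1-q)^n / v^{n+1}) u^n [n]_q!, where [n]_q! = ∏_{k=1}^n (1-q^k)/(1-q) and N_q is the series-defined q-Natural transform. -/
/-- The q-Pochhammer symbol `(a;q)_n`. -/
noncomputable def qPoch (q a : ℝ) (n : ℕ) : ℝ := ∏ k ∈ Finset.range n, (1 - a * q ^ k)

/-- `(a;q)_∞`. -/
noncomputable def qPochInf (q a : ℝ) : ℝ := ∏' k : ℕ, (1 - a * q ^ k)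

/-- The first-type q-Natural transform. -/
noncomputable def qNatural (q : ℝ) (f : ℝ → ℝ) (u v : ℝ) : ℝ :=
  qPochInf q q / v * ∑' k : ℕ, q ^ k * f (u / v * q ^ k) / qPoch q q k

/-- The q-factorial `[n]_q! = ∏_{k=1}^n (1-q^k)/(1-q)`. -/
noncomputable def qFactorial (q : ℝ) (n : ℕ) : ℝ :=
  ∏ k ∈ Finset.Icc 1 n, (1 - q ^ k) / (1 - q)

/-! Substituting `x ↦ x ^ n` turns the series into `(u/v)^n ∑ (q^{n+1})^k/(q;q)_k`, a value of
Euler's q-exponential `e_q(z) = ∑ z^k/(q;q)_k`. Its functional equation `e_q(zq) = (1-z) e_q(z)`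
iterates to `e_q(zq^m) = (z;q)_m e_q(z)`; as `m → ∞` the left side tends to `e_q(0) = 1`, which
gives Euler's identity `(z;q)_∞ e_q(z) = 1`. Hence `e_q(q^{n+1}) = (q;q)_n/(q;q)_∞`, and
`(q;q)_n = (1-q)^n [n]_q!`. -/

open Filter Topology

noncomputable def qExp (q z : ℝ) : ℝ := ∑' k : ℕ, z ^ k / qPoch q q k

section

variable {q a z : ℝ}

lemma qPoch_succ (q a : ℝ) (k : ℕ) : qPoch q a (k + 1) = qPoch q a k * (1 - a * q ^ k) :=
  Finset.prod_range_succ _ _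

lemma abs_mul_pow_le (hq : |q| ≤ 1) (a : ℝ) (k : ℕ) : |a * q ^ k| ≤ |a| := by
  rw [abs_mul, abs_pow]
  exact mul_le_of_le_one_right (abs_nonneg a) (pow_le_one₀ (abs_nonneg q) hq)

lemma one_sub_mul_pow_ne_zero (hq : |q| ≤ 1) (ha : |a| < 1) (k : ℕ) : 1 - a * q ^ k ≠ 0 := by
  refine sub_ne_zero.mpr fun h => ?_
  have := abs_mul_pow_le hq a k
  rw [← h, abs_one] at this
  linarith

lemma qPoch_ne_zero (hq : |q| ≤ 1) (ha : |a| < 1) (n : ℕ) : qPoch q a n ≠ 0 :=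
  Finset.prod_ne_zero_iff.mpr fun k _ => one_sub_mul_pow_ne_zero hq ha k

lemma qPoch_eq_one_sub_pow_mul_qFactorial (hq : q ≠ 1) (n : ℕ) :
    qPoch q q n = (1 - q) ^ n * qFactorial q n := by
  have hq' : 1 - q ≠ 0 := sub_ne_zero.mpr hq.symm
  induction n with
  | zero => simp [qPoch, qFactorial]
  | succ n ih =>
    rw [qPoch_succ, ih, qFactorial, qFactorial, Finset.prod_Icc_succ_top (by omega)]
    field_simp
    ring

lemma summable_norm_pow_div_qPoch (hq : |q| < 1) (hz : |z| < 1) :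
    Summable fun k : ℕ => ‖z ^ k / qPoch q q k‖ := by
  obtain ⟨r, hzr, hr⟩ := exists_between hz
  have hratio : Tendsto (fun k : ℕ => |z| / |1 - q * q ^ k|) atTop (𝓝 (|z| / |1 - q * 0|)) :=
    tendsto_const_nhds.div ((tendsto_const_nhds.sub (tendsto_const_nhds.mul
      (tendsto_pow_atTop_nhds_zero_of_abs_lt_one hq))).abs) (by simp)
  rw [mul_zero, sub_zero, abs_one, div_one] at hratio
  refine summable_of_ratio_norm_eventually_le hr ?_
  filter_upwards [hratio.eventually_le_const hzr] with k hk
  simp only [Real.norm_eq_abs, abs_abs, abs_div, abs_pow, abs_mul, qPoch_succ, pow_succ]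
  calc |z| ^ k * |z| / (|qPoch q q k| * |1 - q * q ^ k|)
      = |z| ^ k / |qPoch q q k| * (|z| / |1 - q * q ^ k|) := by ring
    _ ≤ |z| ^ k / |qPoch q q k| * r := by gcongr
    _ = r * (|z| ^ k / |qPoch q q k|) := mul_comm _ _

lemma qExp_zero (q : ℝ) : qExp q 0 = 1 := by
  rw [qExp, tsum_eq_single 0 fun k hk => by simp [hk]]
  simp [qPoch]

lemma qExp_mul (hq : |q| < 1) (hz : |z| < 1) : qExp q (z * q) = (1 - z) * qExp q z := by
  have hqz : |z * q| < 1 := by simpa using (abs_mul_pow_le hq.le z 1).trans_lt hz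
  have hs := (summable_norm_pow_div_qPoch hq hz).of_norm
  have hs' := (summable_norm_pow_div_qPoch hq hqz).of_norm
  have hterm (k : ℕ) : z ^ (k + 1) / qPoch q q (k + 1) - (z * q) ^ (k + 1) / qPoch q q (k + 1)
      = z * (z ^ k / qPoch q q k) := by
    have hP := qPoch_ne_zero hq.le hq k
    have hc := one_sub_mul_pow_ne_zero hq.le hq k
    rw [qPoch_succ]
    field_simp
    ring
  have hdiff : qExp q z - qExp q (z * q) = z * qExp q z := by
    rw [qExp, qExp, ← hs.tsum_sub hs', (hs.sub hs').tsum_eq_zero_add, tsum_congr hterm,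
      tsum_mul_left]
    simp
  linarith

lemma qExp_mul_pow (hq : |q| < 1) (hz : |z| < 1) (m : ℕ) :
    qExp q (z * q ^ m) = qPoch q z m * qExp q z := by
  induction m with
  | zero => simp [qPoch]
  | succ m ih =>
    rw [pow_succ, ← mul_assoc, qExp_mul hq ((abs_mul_pow_le hq.le z m).trans_lt hz), ih,
      qPoch_succ]
    ring

lemma tendsto_qExp_mul_pow (hq : |q| < 1) (hz : |z| < 1) :
    Tendsto (fun m : ℕ => qExp q (z * q ^ m)) atTop (𝓝 1) := by
  rw [← qExp_zero q]
  refine tendsto_tsum_of_dominated_convergence (summable_norm_pow_div_qPoch hq hz) (fun k => ?_)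
    (Eventually.of_forall fun m k => ?_)
  · simpa using (((tendsto_pow_atTop_nhds_zero_of_abs_lt_one hq).const_mul z).pow k).div_const
      (qPoch q q k)
  · simp only [norm_div, norm_pow, Real.norm_eq_abs]
    gcongr ?_ ^ _ / _
    exact abs_mul_pow_le hq.le z m

lemma multipliable_one_sub_mul_pow (hq : |q| < 1) (a : ℝ) :
    Multipliable fun k : ℕ => 1 - a * q ^ k := by
  simpa [sub_eq_add_neg] using Real.multipliable_one_add_of_summable
    ((summable_geometric_of_abs_lt_one hq).mul_left a).neg

lemma qPochInf_mul_qExp (hq : |q| < 1) (hz : |z| < 1) : qPochInf q z * qExp q z = 1 := by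
  have hpartial : Tendsto (fun m : ℕ => qPoch q z m * qExp q z) atTop
      (𝓝 (qPochInf q z * qExp q z)) :=
    (multipliable_one_sub_mul_pow hq z).hasProd.tendsto_prod_nat.mul_const _
  simp only [← qExp_mul_pow hq hz] at hpartial
  exact tendsto_nhds_unique hpartial (tendsto_qExp_mul_pow hq hz)

end

theorem qNatural_pow_general (q u v : ℝ) (n : ℕ) (hq0 : 0 < q) (hq1 : q < 1) :
    qNatural q (fun x => x ^ n) u v
      = (1 - q) ^ n / v ^ (n + 1) * u ^ n * qFactorial q n := by
  have hq : |q| < 1 := abs_lt.mpr ⟨by linarith, hq1⟩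
  have hseries : ∑' k : ℕ, q ^ k * (u / v * q ^ k) ^ n / qPoch q q k
      = (u / v) ^ n * qExp q (q * q ^ n) := by
    rw [qExp, ← tsum_mul_left]
    congr 1 with k
    ring
  rw [qNatural, hseries, qExp_mul_pow hq hq, qPoch_eq_one_sub_pow_mul_qFactorial hq1.ne]
  calc qPochInf q q / v * ((u / v) ^ n * ((1 - q) ^ n * qFactorial q n * qExp q q))
      = (1 - q) ^ n * (u / v) ^ n / v * qFactorial q n * (qPochInf q q * qExp q q) := by ring
    _ = (1 - q) ^ n / v ^ (n + 1) * u ^ n * qFactorial q n := by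
      rw [qPochInf_mul_qExp hq hq, div_pow, pow_succ]
      ring

/-- For `0 < q < 1`, `u, v > 0` and `n ∈ ℕ`,
`N_q(x^n)(u;v) = ((1-q)^n/v^{n+1}) u^n [n]_q!`. -/
theorem qNatural_pow (q u v : ℝ) (n : ℕ) (hq0 : 0 < q) (hq1 : q < 1)
    (hu : 0 < u) (hv : 0 < v) :
    qNatural q (fun x => x ^ n) u v
      = (1 - q) ^ n / v ^ (n + 1) * u ^ n * qFactorial q n :=
  qNatural_pow_general q u v n hq0 hq1
end

section
/- Let 0 < q < 1, a ∈ ℝ, and u, v > 0 with |a u| < v. Define cos_q(t) = (e_q(it) + e_q(-it))/2. Then N_q(cos_q(a x))(u;v) = v/(v² + a² u²). -/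
open Complex

/-- The complex q-Pochhammer symbol `(a;q)_n`. -/
noncomputable def qPochC (q a : ℂ) (n : ℕ) : ℂ := ∏ k ∈ Finset.range n, (1 - a * q ^ k)

/-- The complex q-exponential `e_q(t) = ∑_{n≥0} t^n/(q;q)_n`. -/
noncomputable def qExpC (q t : ℂ) : ℂ := ∑' n : ℕ, t ^ n / qPochC q q n

/-- `cos_q(t) = (e_q(it) + e_q(-it))/2`. -/
noncomputable def qCos (q t : ℂ) : ℂ := (qExpC q (I * t) + qExpC q (-(I * t))) / 2

/-- The first-type q-Natural transform of a complex-valued function. -/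
noncomputable def qNaturalC (q : ℝ) (f : ℝ → ℂ) (u v : ℝ) : ℂ :=
  (∏' k : ℕ, (1 - (q : ℂ) * (q : ℂ) ^ k)) / (v : ℂ) *
    ∑' k : ℕ, (q : ℂ) ^ k * f (u / v * q ^ k) / qPochC q q k

/-! Expanding `e_q(z q^k)` and summing first over `k` turns `∑_k q^k e_q(z q^k)/(q;q)_k` into
`∑_n z^n e_q(q^{n+1})/(q;q)_n`. Euler's identity `e_q(q^{n+1}) = (q;q)_n/(q;q)_∞`, which follows
from `(1 - z) e_q(z) = e_q(qz)` and the continuity of `e_q` at `0`, collapses this to the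
geometric series `(1 - z)⁻¹/(q;q)_∞`. Hence `N_q(e_q(bx))(u;v) = 1/(v - bu)`, and averaging over
`b = ±ia` gives `v/(v² + a²u²)`. -/

open Filter Topology

lemma qPochC_zero (q a : ℂ) : qPochC q a 0 = 1 := Finset.prod_range_zero _

lemma qPochC_succ (q a : ℂ) (n : ℕ) : qPochC q a (n + 1) = qPochC q a n * (1 - a * q ^ n) :=
  Finset.prod_range_succ _ _

noncomputable def qPochR (q : ℝ) (n : ℕ) : ℝ := ∏ k ∈ Finset.range n, (1 - q ^ (k + 1))

noncomputable def qPochInfty (q : ℝ) : ℝ := ∏' k : ℕ, (1 - q ^ (k + 1))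

lemma qPochC_ofReal (q : ℝ) (n : ℕ) : qPochC q q n = qPochR q n := by
  simp [qPochC, qPochR, pow_succ']

section QPochhammer

variable {q : ℝ}

lemma one_sub_pow_succ_pos (hq0 : 0 < q) (hq1 : q < 1) (k : ℕ) : 0 < 1 - q ^ (k + 1) :=
  sub_pos.mpr (pow_lt_one₀ hq0.le hq1 k.succ_ne_zero)

lemma qPochR_pos (hq0 : 0 < q) (hq1 : q < 1) (n : ℕ) : 0 < qPochR q n :=
  Finset.prod_pos fun k _ ↦ one_sub_pow_succ_pos hq0 hq1 k

lemma qPochR_antitone (hq0 : 0 < q) (hq1 : q < 1) : Antitone (qPochR q) := by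
  refine antitone_nat_of_succ_le fun n ↦ ?_
  rw [qPochR, Finset.prod_range_succ]
  exact mul_le_of_le_one_right (qPochR_pos hq0 hq1 n).le (by linarith [pow_pos hq0 (n + 1)])

lemma summable_pow_succ (hq0 : 0 < q) (hq1 : q < 1) : Summable fun k : ℕ ↦ q ^ (k + 1) :=
  (summable_nat_add_iff 1).mpr (summable_geometric_of_lt_one hq0.le hq1)

lemma hasProd_qPochInfty (hq0 : 0 < q) (hq1 : q < 1) :
    HasProd (fun k : ℕ ↦ 1 - q ^ (k + 1)) (qPochInfty q) := by
  simpa [qPochInfty, sub_eq_add_neg] using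
    (Real.multipliable_one_add_of_summable (summable_pow_succ hq0 hq1).neg).hasProd

lemma qPochInfty_pos (hq0 : 0 < q) (hq1 : q < 1) : 0 < qPochInfty q := by
  have hlog : Summable fun k : ℕ ↦ Real.log (1 - q ^ (k + 1)) := by
    simpa [sub_eq_add_neg] using
      Real.summable_log_one_add_of_summable (summable_pow_succ hq0 hq1).neg
  rw [qPochInfty, ← Real.rexp_tsum_eq_tprod (one_sub_pow_succ_pos hq0 hq1) hlog]
  exact Real.exp_pos _

lemma qPochInfty_le_qPochR (hq0 : 0 < q) (hq1 : q < 1) (n : ℕ) : qPochInfty q ≤ qPochR q n :=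
  (qPochR_antitone hq0 hq1).le_of_tendsto (hasProd_qPochInfty hq0 hq1).tendsto_prod_nat n

lemma tendsto_qPochC (hq0 : 0 < q) (hq1 : q < 1) :
    Tendsto (fun n ↦ qPochC q q n) atTop (𝓝 (qPochInfty q : ℂ)) := by
  simp only [qPochC_ofReal]
  exact (continuous_ofReal.tendsto _).comp (hasProd_qPochInfty hq0 hq1).tendsto_prod_nat

lemma tprod_one_sub_mul_pow (hq0 : 0 < q) (hq1 : q < 1) :
    ∏' k : ℕ, (1 - (q : ℂ) * (q : ℂ) ^ k) = qPochInfty q := by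
  refine (HasProd.congr_fun ((hasProd_qPochInfty hq0 hq1).map ofRealHom continuous_ofReal)
    fun k ↦ ?_).tprod_eq
  simp [pow_succ']

lemma qPochC_ne_zero (hq0 : 0 < q) (hq1 : q < 1) (n : ℕ) : qPochC q q n ≠ 0 := by
  rw [qPochC_ofReal]
  exact_mod_cast (qPochR_pos hq0 hq1 n).ne'

lemma norm_qPochC_inv_le (hq0 : 0 < q) (hq1 : q < 1) (n : ℕ) :
    ‖(qPochC q q n)⁻¹‖ ≤ (qPochInfty q)⁻¹ := by
  rw [qPochC_ofReal, norm_inv, norm_real, Real.norm_of_nonneg (qPochR_pos hq0 hq1 n).le]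
  exact inv_anti₀ (qPochInfty_pos hq0 hq1) (qPochInfty_le_qPochR hq0 hq1 n)

end QPochhammer

section QExp

variable {q : ℝ}

lemma norm_pow_div_qPochC_le (hq0 : 0 < q) (hq1 : q < 1) (z : ℂ) (n : ℕ) :
    ‖z ^ n / qPochC q q n‖ ≤ ‖z‖ ^ n * (qPochInfty q)⁻¹ := by
  rw [div_eq_mul_inv, norm_mul, norm_pow]
  exact mul_le_mul_of_nonneg_left (norm_qPochC_inv_le hq0 hq1 n) (by positivity)

lemma hasSum_qExpC {z : ℂ} (hq0 : 0 < q) (hq1 : q < 1) (hz : ‖z‖ < 1) :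
    HasSum (fun n ↦ z ^ n / qPochC q q n) (qExpC q z) :=
  (Summable.of_norm_bounded ((summable_geometric_of_lt_one (norm_nonneg z) hz).mul_right _)
    (norm_pow_div_qPochC_le hq0 hq1 z)).hasSum

lemma qExpC_zero (q : ℂ) : qExpC q 0 = 1 := by
  rw [qExpC, tsum_eq_single 0 fun n hn ↦ by simp [hn]]
  simp [qPochC_zero]

lemma continuousAt_qExpC_zero (hq0 : 0 < q) (hq1 : q < 1) : ContinuousAt (qExpC q) 0 := by
  refine tendsto_tsum_of_dominated_convergence
    (bound := fun n ↦ (1 / 2) ^ n * (qPochInfty q)⁻¹) (summable_geometric_two.mul_right _)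
    (fun n ↦ ((continuous_pow n).div_const _).tendsto 0) ?_
  filter_upwards [Metric.closedBall_mem_nhds (0 : ℂ) one_half_pos] with w hw n
  refine (norm_pow_div_qPochC_le hq0 hq1 w n).trans ?_
  have hw' : ‖w‖ ≤ 1 / 2 := by simpa using hw
  have hC := (qPochInfty_pos hq0 hq1).le
  gcongr

lemma one_sub_mul_qExpC {z : ℂ} (hq0 : 0 < q) (hq1 : q < 1) (hz : ‖z‖ < 1) :
    (1 - z) * qExpC q z = qExpC q (q * z) := by
  have hqz : ‖(q : ℂ) * z‖ < 1 := by
    rw [norm_mul, norm_real, Real.norm_of_nonneg hq0.le]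
    nlinarith [norm_nonneg z]
  have ha := hasSum_qExpC hq0 hq1 hz
  have hshift := ((hasSum_nat_add_iff' 1).mpr ha).sub (ha.mul_left z)
  have hb := (hasSum_nat_add_iff' 1).mpr (hasSum_qExpC hq0 hq1 hqz)
  simp only [Finset.sum_range_one, pow_zero, qPochC_zero, div_one] at hshift hb
  have hterm : ∀ n : ℕ, z ^ (n + 1) / qPochC q q (n + 1) - z * (z ^ n / qPochC q q n)
      = ((q : ℂ) * z) ^ (n + 1) / qPochC q q (n + 1) := by
    intro n
    have hn := qPochC_ne_zero hq0 hq1 (n + 1)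
    rw [qPochC_succ] at hn ⊢
    have hk := right_ne_zero_of_mul hn
    have hn' := left_ne_zero_of_mul hn
    field_simp
    ring
  have hsum := (hb.congr_fun hterm).unique hshift
  linear_combination -hsum

lemma norm_ofReal_pow_mul_le (hq0 : 0 < q) (hq1 : q < 1) (z : ℂ) (n : ℕ) :
    ‖(q : ℂ) ^ n * z‖ ≤ ‖z‖ := by
  rw [norm_mul, norm_pow, norm_real, Real.norm_of_nonneg hq0.le]
  exact mul_le_of_le_one_left (norm_nonneg z) (pow_le_one₀ hq0.le hq1.le)

lemma qPochC_mul_qExpC {z : ℂ} (hq0 : 0 < q) (hq1 : q < 1) (hz : ‖z‖ < 1) (n : ℕ) :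
    qPochC q z n * qExpC q z = qExpC q (q ^ n * z) := by
  induction n with
  | zero => simp [qPochC_zero]
  | succ n ih =>
    rw [qPochC_succ, mul_right_comm, ih, pow_succ', mul_assoc,
      ← one_sub_mul_qExpC hq0 hq1 ((norm_ofReal_pow_mul_le hq0 hq1 z n).trans_lt hz)]
    ring

lemma qExpC_ofReal_self (hq0 : 0 < q) (hq1 : q < 1) : qExpC q q = (qPochInfty q : ℂ)⁻¹ := by
  have hq : ‖(q : ℂ)‖ < 1 := by rwa [norm_real, Real.norm_of_nonneg hq0.le]
  have hzero : Tendsto (fun n : ℕ ↦ (q : ℂ) ^ n * q) atTop (𝓝 0) := by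
    simpa using (tendsto_pow_atTop_nhds_zero_of_norm_lt_one hq).mul_const (q : ℂ)
  have hlim : Tendsto (fun n : ℕ ↦ qExpC q ((q : ℂ) ^ n * q)) atTop (𝓝 1) := by
    have h := (continuousAt_qExpC_zero hq0 hq1).tendsto.comp hzero
    rwa [qExpC_zero] at h
  have hlim' : Tendsto (fun n : ℕ ↦ qExpC q ((q : ℂ) ^ n * q)) atTop
      (𝓝 (qPochInfty q * qExpC q q)) :=
    ((tendsto_qPochC hq0 hq1).mul_const _).congr fun n ↦ qPochC_mul_qExpC hq0 hq1 hq n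
  exact eq_inv_of_mul_eq_one_right (tendsto_nhds_unique hlim' hlim)

lemma qExpC_pow_mul_self (hq0 : 0 < q) (hq1 : q < 1) (n : ℕ) :
    qExpC q ((q : ℂ) ^ n * q) = qPochC q q n / qPochInfty q := by
  have hq : ‖(q : ℂ)‖ < 1 := by rwa [norm_real, Real.norm_of_nonneg hq0.le]
  rw [← qPochC_mul_qExpC hq0 hq1 hq, qExpC_ofReal_self hq0 hq1, div_eq_mul_inv]

lemma hasSum_pow_mul_qExpC_div_qPochC {z : ℂ} (hq0 : 0 < q) (hq1 : q < 1)
    (hz : ‖z‖ < 1) :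
    HasSum (fun k : ℕ ↦ (q : ℂ) ^ k * qExpC q (q ^ k * z) / qPochC q q k)
      ((1 - z)⁻¹ / qPochInfty q) := by
  set F : ℕ × ℕ → ℂ := fun p ↦
    (q : ℂ) ^ p.1 / qPochC q q p.1 * (((q : ℂ) ^ p.1 * z) ^ p.2 / qPochC q q p.2)
  have hF : Summable F := by
    have hC := (qPochInfty_pos hq0 hq1).le
    refine Summable.of_norm_bounded
      (g := fun p ↦ q ^ p.1 * (qPochInfty q)⁻¹ * (‖z‖ ^ p.2 * (qPochInfty q)⁻¹))
      (((summable_geometric_of_lt_one hq0.le hq1).mul_right _).mul_of_nonneg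
        ((summable_geometric_of_lt_one (norm_nonneg z) hz).mul_right _) (fun _ ↦ by positivity)
        (fun _ ↦ by positivity)) fun ⟨k, n⟩ ↦ ?_
    rw [norm_mul]
    refine mul_le_mul ?_ ?_ (norm_nonneg _) (by positivity)
    · simpa [abs_of_pos hq0] using norm_pow_div_qPochC_le hq0 hq1 (q : ℂ) k
    · refine (norm_pow_div_qPochC_le hq0 hq1 _ n).trans ?_
      gcongr
      exact norm_ofReal_pow_mul_le hq0 hq1 z k
  have hrows (k : ℕ) :
      HasSum (fun n ↦ F (k, n)) ((q : ℂ) ^ k * qExpC q (q ^ k * z) / qPochC q q k) := by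
    rw [mul_div_right_comm]
    exact (hasSum_qExpC hq0 hq1 ((norm_ofReal_pow_mul_le hq0 hq1 z k).trans_lt hz)).mul_left
      ((q : ℂ) ^ k / qPochC q q k)
  have hcols (n : ℕ) : HasSum (fun k ↦ F (k, n)) (z ^ n / qPochInfty q) := by
    have hq : ‖(q : ℂ) ^ n * q‖ < 1 := by
      refine (norm_ofReal_pow_mul_le hq0 hq1 _ n).trans_lt ?_
      rwa [norm_real, Real.norm_of_nonneg hq0.le]
    have h := (hasSum_qExpC hq0 hq1 hq).mul_left (z ^ n / qPochC q q n)
    rw [qExpC_pow_mul_self hq0 hq1, div_mul_div_cancel₀ (qPochC_ne_zero hq0 hq1 n)] at h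
    refine h.congr_fun fun k ↦ ?_
    ring
  have htotal := ((Equiv.prodComm ℕ ℕ).hasSum_iff.mpr hF.hasSum).prod_fiberwise hcols
  rw [((hasSum_geometric_of_norm_lt_one hz).div_const _).unique htotal]
  exact hF.hasSum.prod_fiberwise hrows

end QExp

lemma inv_one_sub_I_mul_add_inv_one_add_I_mul (t : ℝ) :
    (1 - I * t)⁻¹ + (1 + I * t)⁻¹ = 2 / (1 + (t : ℂ) ^ 2) := by
  have h₁ : (1 : ℂ) - I * t ≠ 0 := fun h ↦ by simpa using congrArg re h
  have h₂ : (1 : ℂ) + I * t ≠ 0 := fun h ↦ by simpa using congrArg re h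
  have h₃ : (1 : ℂ) + (t : ℂ) ^ 2 ≠ 0 := by
    exact_mod_cast (by positivity : (0 : ℝ) < 1 + t ^ 2).ne'
  field_simp
  linear_combination (2 * (t : ℂ) ^ 2) * I_sq

theorem qNatural_qCos_general (q a u v : ℝ) (hq0 : 0 < q) (hq1 : q < 1)
    (hv : 0 < v) (h : |a * u| < v) :
    qNaturalC q (fun x => qCos q (a * x)) u v
      = (v : ℝ) / ((v ^ 2 + a ^ 2 * u ^ 2 : ℝ) : ℂ) := by
  set t : ℝ := a * u / v with ht_def
  have ht : ‖I * t‖ < 1 := by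
    rwa [norm_mul, norm_I, one_mul, norm_real, Real.norm_eq_abs, ht_def, abs_div, abs_of_pos hv,
      div_lt_one hv]
  have harg (k : ℕ) : I * (a * ((u / v * q ^ k : ℝ) : ℂ)) = (q : ℂ) ^ k * (I * t) := by
    push_cast [ht_def]
    ring
  have hsum : HasSum
      (fun k : ℕ ↦ (q : ℂ) ^ k * qCos q (a * ((u / v * q ^ k : ℝ) : ℂ)) / qPochC q q k)
      (((1 - I * t)⁻¹ / qPochInfty q + (1 - -(I * t))⁻¹ / qPochInfty q) / 2) := by
    refine (((hasSum_pow_mul_qExpC_div_qPochC hq0 hq1 ht).add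
      (hasSum_pow_mul_qExpC_div_qPochC hq0 hq1 (by rwa [norm_neg]))).div_const 2).congr_fun
      fun k ↦ ?_
    simp only [qCos, harg, ← mul_neg]
    ring
  rw [qNaturalC, tprod_one_sub_mul_pow hq0 hq1, hsum.tsum_eq, ← add_div, sub_neg_eq_add,
    inv_one_sub_I_mul_add_inv_one_add_I_mul]
  have hC : (qPochInfty q : ℂ) ≠ 0 := by exact_mod_cast (qPochInfty_pos hq0 hq1).ne'
  have hv' : (v : ℂ) ≠ 0 := by exact_mod_cast hv.ne'
  have hd : ((v ^ 2 + a ^ 2 * u ^ 2 : ℝ) : ℂ) ≠ 0 := by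
    exact_mod_cast (by positivity : (0 : ℝ) < v ^ 2 + a ^ 2 * u ^ 2).ne'
  push_cast [ht_def] at hd ⊢
  field_simp

/-- For `0 < q < 1`, `u, v > 0`, `a ∈ ℝ` with `|a u| < v`,
`N_q(cos_q(a x))(u;v) = v/(v² + a² u²)`. -/
theorem qNatural_qCos (q a u v : ℝ) (hq0 : 0 < q) (hq1 : q < 1)
    (hu : 0 < u) (hv : 0 < v) (h : |a * u| < v) :
    qNaturalC q (fun x => qCos q (a * x)) u v
      = (v : ℝ) / ((v ^ 2 + a ^ 2 * u ^ 2 : ℝ) : ℂ) :=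
  qNatural_qCos_general q a u v hq0 hq1 hv h
end
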